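/- Suppose r(h) < 1 for every safe history h. Then for every 0 ≤ t ≤ n and every safe history h of length t+1, er(h, π) = ∑_{τ a trajectory with prefix_t τ = h} p_t(τ) · ser_t(τ), where the sum ranges over all trajectories extending h (the terms for unsafe trajectories vanish since ser_t is 0 there). -/

import Mathlib

open Finset
open scoped Classical

noncomputable section

/-- The restriction of a trajectory `τ : Fin (n+1) → S` to its first `t+1` entries. -/
def pre {S : Type*} {n : ℕ} (τ : Fin (n + 1) → S) (t : ℕ) (ht : t + 1 ≤ n + 1) :
    Fin (t + 1) → S :=
  fun i => τ (Fin.castLE ht i)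

/-- The immediate risk of a history `h` of length `t+1`. -/
def risk {S A : Type*} [Fintype S] (T : S → A → S → ℝ) (C : Set S)
    (π : (t : ℕ) → (Fin (t + 1) → S) → A) {t : ℕ} (h : Fin (t + 1) → S) : ℝ :=
  ∑ s' ∈ univ.filter (fun s' => s' ∉ C), T (h (Fin.last t)) (π t h) s'

/-- The conditional probability of trajectory `τ` from step `t` on:
`p_t(τ) = ∏_{i=t}^{n-1} T (τ i) (π (prefix_i τ)) (τ (i+1))`. -/
def probFrom {S A : Type*} {n : ℕ} (T : S → A → S → ℝ)
    (π : (t : ℕ) → (Fin (t + 1) → S) → A) (t : ℕ) (τ : Fin (n + 1) → S) : ℝ :=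
  ∏ i ∈ univ.filter (fun i : Fin n => t ≤ (i : ℕ)),
    T (τ i.castSucc) (π i (pre τ i (Nat.succ_le_succ i.isLt.le))) (τ i.succ)

/-- The suffix survival product `P_t(τ) = ∏_{i=t}^{n-1} (1 - r(prefix_i τ))`. -/
def survFrom {S A : Type*} [Fintype S] {n : ℕ} (T : S → A → S → ℝ) (C : Set S)
    (π : (t : ℕ) → (Fin (t + 1) → S) → A) (t : ℕ) (τ : Fin (n + 1) → S) : ℝ :=
  ∏ i ∈ univ.filter (fun i : Fin n => t ≤ (i : ℕ)),
    (1 - risk T C π (pre τ i (Nat.succ_le_succ i.isLt.le)))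

/-- The suffix sequence execution risk `ser_t(τ)`:
`(1 - P_t(τ))/P_t(τ)` for safe trajectories and `0` otherwise. -/
def serFrom {S A : Type*} [Fintype S] {n : ℕ} (T : S → A → S → ℝ) (C : Set S)
    (π : (t : ℕ) → (Fin (t + 1) → S) → A) (t : ℕ) (τ : Fin (n + 1) → S) : ℝ :=
  if ∀ i, τ i ∈ C then (1 - survFrom T C π t τ) / survFrom T C π t τ else 0

/-- The execution risk of the policy `π` after the safe history `h` of length `t+1`:
one minus the conditional probability of the safe trajectories extending `h`. -/
def erHist {S A : Type*} [Fintype S] (n : ℕ) (T : S → A → S → ℝ) (C : Set S)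
    (π : (t : ℕ) → (Fin (t + 1) → S) → A) {t : ℕ} (ht : t + 1 ≤ n + 1)
    (h : Fin (t + 1) → S) : ℝ :=
  1 - ∑ τ ∈ univ.filter (fun τ : Fin (n + 1) → S =>
        (∀ i, τ i ∈ C) ∧ pre τ t ht = h), probFrom T π t τ

/-!
Dividing `p_t(τ)` by `P_t(τ)` replaces each transition factor `T (τ i) (π _) (τ (i+1))` by
`safeKernel`, the transition law conditioned on staying in `C`, which is a probability
distribution on `C` as long as the risk is below one. Summing a product of such kernels over
all safe continuations of `h` gives `1` (backward induction on `t`). On a safe trajectory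
`p_t · ser_t = p_t / P_t - p_t`, so the expected `ser_t` is `1 - ∑_{τ safe} p_t(τ)`, which is
the execution risk.
-/

section Trajectory

variable {S : Type*} {n : ℕ}

lemma pre_self (τ : Fin (n + 1) → S) (ht : n + 1 ≤ n + 1) : pre τ n ht = τ :=
  rfl

lemma pre_zero (τ : Fin (n + 1) → S) {t : ℕ} (ht : t + 1 ≤ n + 1) : pre τ t ht 0 = τ 0 :=
  congrArg τ (Fin.ext (by simp))

lemma pre_succ_eq_snoc_iff (τ : Fin (n + 1) → S) {t : ℕ} (htn : t < n)
    (h : Fin (t + 1) → S) (s : S) :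
    pre τ (t + 1) (by omega) = Fin.snoc h s
      ↔ pre τ t (by omega) = h ∧ τ ⟨t + 1, by omega⟩ = s := by
  constructor
  · intro e
    exact ⟨funext fun i => (congrFun e i.castSucc).trans (Fin.snoc_castSucc ..),
      (congrFun e (Fin.last (t + 1))).trans (Fin.snoc_last ..)⟩
  · rintro ⟨rfl, rfl⟩
    funext j
    refine Fin.lastCases ?_ (fun i => ?_) j
    · simp only [Fin.snoc_last]; rfl
    · simp only [Fin.snoc_castSucc]; rfl

end Trajectory

section SuffixProduct

variable {M : Type*} [CommMonoid M] {n : ℕ}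

lemma prod_filter_le_val_self (f : Fin n → M) :
    ∏ i ∈ univ.filter (fun i : Fin n => n ≤ (i : ℕ)), f i = 1 :=
  Finset.prod_eq_one fun i hi => absurd (mem_filter.1 hi).2 (Nat.not_le.2 i.isLt)

lemma prod_filter_le_val_eq_mul {t : ℕ} (htn : t < n) (f : Fin n → M) :
    ∏ i ∈ univ.filter (fun i : Fin n => t ≤ (i : ℕ)), f i
      = f ⟨t, htn⟩ * ∏ i ∈ univ.filter (fun i : Fin n => t + 1 ≤ (i : ℕ)), f i := by
  have hsplit : univ.filter (fun i : Fin n => t ≤ (i : ℕ))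
      = insert ⟨t, htn⟩ (univ.filter (fun i : Fin n => t + 1 ≤ (i : ℕ))) := by
    ext i
    simp only [mem_filter, mem_univ, true_and, mem_insert, Fin.ext_iff]
    omega
  rw [hsplit, prod_insert (by simp)]

end SuffixProduct

section SafeExtensions

variable {S : Type*} [Fintype S] {n : ℕ}

def safeExtensions (C : Set S) {t : ℕ} (ht : t + 1 ≤ n + 1) (h : Fin (t + 1) → S) :
    Finset (Fin (n + 1) → S) :=
  univ.filter fun τ => (∀ i, τ i ∈ C) ∧ pre τ t ht = h

@[simp]
lemma mem_safeExtensions {C : Set S} {t : ℕ} {ht : t + 1 ≤ n + 1} {h : Fin (t + 1) → S}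
    {τ : Fin (n + 1) → S} : τ ∈ safeExtensions C ht h ↔ (∀ i, τ i ∈ C) ∧ pre τ t ht = h := by
  simp only [safeExtensions, mem_filter, mem_univ, true_and]

lemma safeExtensions_self (C : Set S) (h : Fin (n + 1) → S) (hsafe : ∀ i, h i ∈ C) :
    safeExtensions C le_rfl h = {h} := by
  ext τ
  simp only [mem_safeExtensions, mem_singleton, pre_self]
  exact ⟨And.right, fun e => ⟨e ▸ hsafe, e⟩⟩

lemma sum_safeExtensions_succ {M : Type*} [AddCommMonoid M] (C : Set S) {t : ℕ} (htn : t < n)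
    (h : Fin (t + 1) → S) (f : (Fin (n + 1) → S) → M) :
    ∑ τ ∈ safeExtensions C (by omega) h, f τ
      = ∑ s ∈ univ.filter (· ∈ C), ∑ τ ∈ safeExtensions C (by omega) (Fin.snoc h s), f τ := by
  rw [← sum_fiberwise_of_maps_to (g := fun τ => τ ⟨t + 1, by omega⟩)
    (fun τ hτ => mem_filter.2 ⟨mem_univ _, (mem_safeExtensions.1 hτ).1 _⟩)]
  refine sum_congr rfl fun s _ => sum_congr ?_ fun _ _ => rfl
  ext τ
  simp only [mem_safeExtensions, mem_filter, pre_succ_eq_snoc_iff τ htn]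
  tauto

lemma sum_safeExtensions_prod_eq_one {R : Type*} [CommSemiring R] (C : Set S) (s₀ : S)
    (w : (i : ℕ) → (Fin (i + 1) → S) → S → R)
    (hw : ∀ i < n, ∀ h : Fin (i + 1) → S, h 0 = s₀ → (∀ j, h j ∈ C) →
      ∑ s ∈ univ.filter (· ∈ C), w i h s = 1)
    {t : ℕ} (ht : t ≤ n) (h : Fin (t + 1) → S) (hh0 : h 0 = s₀) (hsafe : ∀ j, h j ∈ C) :
    ∑ τ ∈ safeExtensions C (Nat.succ_le_succ ht) h,
      ∏ i ∈ univ.filter (fun i : Fin n => t ≤ (i : ℕ)),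
        w i (pre τ i (Nat.succ_le_succ i.isLt.le)) (τ i.succ) = 1 := by
  induction ht using Nat.decreasingInduction with
  | self => simp [safeExtensions_self C h hsafe, prod_filter_le_val_self]
  | of_succ t htn ih =>
    rw [sum_safeExtensions_succ C htn, ← hw t htn h hh0 hsafe]
    refine sum_congr rfl fun s hs => ?_
    replace hs : s ∈ C := (mem_filter.1 hs).2
    have hsnoc0 : (Fin.snoc h s : Fin (t + 2) → S) 0 = s₀ := by
      rw [← Fin.castSucc_zero, Fin.snoc_castSucc, hh0]
    have hsnoc_safe : ∀ j, (Fin.snoc h s : Fin (t + 2) → S) j ∈ C :=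
      Fin.forall_iff_castSucc.2 ⟨by simpa using hs, fun j => by simpa using hsafe j⟩
    rw [← mul_one (w t h s), ← ih (Fin.snoc h s) hsnoc0 hsnoc_safe, mul_sum]
    refine sum_congr rfl fun τ hτ => ?_
    obtain ⟨-, hτpre⟩ := mem_safeExtensions.1 hτ
    obtain ⟨hpre, hlast⟩ := (pre_succ_eq_snoc_iff τ htn _ _).1 hτpre
    rw [prod_filter_le_val_eq_mul htn]
    change w t (pre τ t (by omega)) (τ ⟨t + 1, by omega⟩) * _ = _
    rw [hpre, hlast]

end SafeExtensions

section Risk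

variable {S A : Type*} [Fintype S] (T : S → A → S → ℝ) (C : Set S)
  (π : (t : ℕ) → (Fin (t + 1) → S) → A)

def safeKernel (i : ℕ) (h : Fin (i + 1) → S) (s : S) : ℝ :=
  T (h (Fin.last i)) (π i h) s / (1 - risk T C π h)

lemma one_sub_risk (hT1 : ∀ s a, ∑ s', T s a s' = 1) {t : ℕ} (h : Fin (t + 1) → S) :
    1 - risk T C π h = ∑ s ∈ univ.filter (· ∈ C), T (h (Fin.last t)) (π t h) s := by
  rw [risk, ← hT1 (h (Fin.last t)) (π t h), ← sum_filter_add_sum_filter_not univ (· ∈ C)]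
  ring

lemma sum_safeKernel (hT1 : ∀ s a, ∑ s', T s a s' = 1) {t : ℕ} (h : Fin (t + 1) → S)
    (hr : risk T C π h ≠ 1) :
    ∑ s ∈ univ.filter (· ∈ C), safeKernel T C π t h s = 1 := by
  simp only [safeKernel]
  rw [← sum_div, ← one_sub_risk T C π hT1, div_self (sub_ne_zero.2 hr.symm)]

lemma probFrom_div_survFrom {n : ℕ} (t : ℕ) (τ : Fin (n + 1) → S) :
    probFrom T π t τ / survFrom T C π t τ
      = ∏ i ∈ univ.filter (fun i : Fin n => t ≤ (i : ℕ)),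
          safeKernel T C π i (pre τ i (Nat.succ_le_succ i.isLt.le)) (τ i.succ) := by
  rw [probFrom, survFrom, ← prod_div_distrib]
  rfl

variable {n : ℕ} {s₀ : S}

lemma survFrom_pos
    (hrisk : ∀ t < n, ∀ h : Fin (t + 1) → S, h 0 = s₀ → (∀ i, h i ∈ C) → risk T C π h < 1)
    {τ : Fin (n + 1) → S} (hτ0 : τ 0 = s₀) (hτ : ∀ i, τ i ∈ C) (t : ℕ) :
    0 < survFrom T C π t τ :=
  prod_pos fun i _ => sub_pos.2 (hrisk i i.isLt _ (by rw [pre_zero, hτ0]) fun _ => hτ _)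

lemma sum_safeExtensions_probFrom_div_survFrom (hT1 : ∀ s a, ∑ s', T s a s' = 1)
    (hrisk : ∀ t < n, ∀ h : Fin (t + 1) → S, h 0 = s₀ → (∀ i, h i ∈ C) → risk T C π h < 1) {t : ℕ}
    (ht : t ≤ n) (h : Fin (t + 1) → S) (hh0 : h 0 = s₀) (hsafe : ∀ i, h i ∈ C) :
    ∑ τ ∈ safeExtensions C (Nat.succ_le_succ ht) h,
      probFrom T π t τ / survFrom T C π t τ = 1 := by
  simp only [probFrom_div_survFrom]
  exact sum_safeExtensions_prod_eq_one C s₀ (safeKernel T C π)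
    (fun i hi h' h0 hs => sum_safeKernel T C π hT1 h' (hrisk i hi h' h0 hs).ne) ht h hh0 hsafe

lemma serFrom_of_not_safe {t : ℕ} {τ : Fin (n + 1) → S} (hτ : ¬ ∀ i, τ i ∈ C) :
    serFrom T C π t τ = 0 :=
  if_neg hτ

lemma sum_probFrom_mul_serFrom_eq_sum_safeExtensions {t : ℕ} (ht : t + 1 ≤ n + 1)
    (h : Fin (t + 1) → S) :
    ∑ τ ∈ univ.filter (fun τ : Fin (n + 1) → S => pre τ t ht = h),
        probFrom T π t τ * serFrom T C π t τ
      = ∑ τ ∈ safeExtensions C ht h, probFrom T π t τ * serFrom T C π t τ := by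
  refine (sum_subset (monotone_filter_right _ fun _ _ => And.right) fun τ hτ hτ' => ?_).symm
  have hτ : ¬ ∀ i, τ i ∈ C := fun hs => hτ' (mem_safeExtensions.2 ⟨hs, (mem_filter.1 hτ).2⟩)
  rw [serFrom_of_not_safe T C π hτ, mul_zero]

lemma probFrom_mul_serFrom {t : ℕ} {τ : Fin (n + 1) → S} (hτ : ∀ i, τ i ∈ C)
    (hP : survFrom T C π t τ ≠ 0) :
    probFrom T π t τ * serFrom T C π t τ
      = probFrom T π t τ / survFrom T C π t τ - probFrom T π t τ := by
  rw [serFrom, if_pos hτ]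
  field_simp

end Risk

theorem er_eq_expected_ser_general
    {S A : Type*} [Fintype S]
    (n : ℕ)
    (C : Set S) (s₀ : S)
    (T : S → A → S → ℝ)
    (hT1 : ∀ s a, ∑ s', T s a s' = 1)
    (π : (t : ℕ) → (Fin (t + 1) → S) → A)
    (hrisk : ∀ (t : ℕ), t ≤ n → ∀ h : Fin (t + 1) → S, h 0 = s₀ → (∀ i, h i ∈ C) →
      risk T C π h < 1)
    (t : ℕ) (ht : t ≤ n)
    (h : Fin (t + 1) → S) (hh0 : h 0 = s₀) (hhsafe : ∀ i, h i ∈ C) :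
    erHist n T C π (Nat.succ_le_succ ht) h
      = ∑ τ ∈ univ.filter (fun τ : Fin (n + 1) → S => pre τ t (Nat.succ_le_succ ht) = h),
          probFrom T π t τ * serFrom T C π t τ := by
  have hrisk' : ∀ t < n, ∀ h : Fin (t + 1) → S, h 0 = s₀ → (∀ i, h i ∈ C) → risk T C π h < 1 :=
    fun t ht => hrisk t ht.le
  rw [sum_probFrom_mul_serFrom_eq_sum_safeExtensions]
  calc erHist n T C π (Nat.succ_le_succ ht) h
      = ∑ τ ∈ safeExtensions C (Nat.succ_le_succ ht) h,
          (probFrom T π t τ / survFrom T C π t τ - probFrom T π t τ) := by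
        rw [sum_sub_distrib,
          sum_safeExtensions_probFrom_div_survFrom T C π hT1 hrisk' ht h hh0 hhsafe]
        rfl
    _ = _ := sum_congr rfl fun τ hτ => by
        obtain ⟨hτsafe, hτpre⟩ := mem_safeExtensions.1 hτ
        have hτ0 : τ 0 = s₀ := by rw [← pre_zero τ (Nat.succ_le_succ ht), hτpre, hh0]
        exact (probFrom_mul_serFrom T C π hτsafe (survFrom_pos T C π hrisk' hτ0 hτsafe t).ne').symm

/-- **Lemma 2 of the paper.** The execution risk after a safe history equals the
conditional expectation of the suffix sequence execution risk over all trajectories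
extending that history. -/
theorem er_eq_expected_ser
    {S A : Type*} [Fintype S] [Nonempty S] [Fintype A] [Nonempty A]
    (n : ℕ) (hn : 1 ≤ n)
    (C : Set S) (s₀ : S) (hs₀ : s₀ ∈ C)
    (T : S → A → S → ℝ)
    (hT0 : ∀ s a s', 0 ≤ T s a s')
    (hT1 : ∀ s a, ∑ s', T s a s' = 1)
    (π : (t : ℕ) → (Fin (t + 1) → S) → A)
    (hrisk : ∀ (t : ℕ), t ≤ n → ∀ h : Fin (t + 1) → S, h 0 = s₀ → (∀ i, h i ∈ C) →
      risk T C π h < 1)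
    (t : ℕ) (ht : t ≤ n)
    (h : Fin (t + 1) → S) (hh0 : h 0 = s₀) (hhsafe : ∀ i, h i ∈ C) :
    erHist n T C π (Nat.succ_le_succ ht) h
      = ∑ τ ∈ univ.filter (fun τ : Fin (n + 1) → S => pre τ t (Nat.succ_le_succ ht) = h),
          probFrom T π t τ * serFrom T C π t τ :=
  er_eq_expected_ser_general n C s₀ T hT1 π hrisk t ht h hh0 hhsafe
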